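/- The forward exchange function is bounded above by the exchange-rate line: F(δ) ≤ E·δ for all δ ≥ 0, where E = γ∇φ(R)ᵢ/∇φ(R)ⱼ is the exchange rate. -/

import Mathlib

/-! Concavity of `φ` puts its graph below the tangent plane at `R`, so the equal-value point
`y = R + γδ eᵢ - F(δ) eⱼ` satisfies `0 = φ y - φ R ≤ ⟪∇φ(R), y - R⟫ = γδ ∇φ(R)ᵢ - F(δ) ∇φ(R)ⱼ`.
Dividing by `∇φ(R)ⱼ > 0` gives the bound. -/

open AffineMap

theorem ConcaveOn.le_add_of_hasFDerivAt {E : Type*} [NormedAddCommGroup E] [NormedSpace ℝ E]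
    {s : Set E} {f : E → ℝ} {f' : E →L[ℝ] ℝ} {x y : E} (hf : ConcaveOn ℝ s f)
    (hx : x ∈ s) (hy : y ∈ s) (hf' : HasFDerivAt f f' x) :
    f y ≤ f x + f' (y - x) := by
  set L : ℝ →ᵃ[ℝ] E := lineMap x y
  have hline : ConcaveOn ℝ (L ⁻¹' s) (f ∘ L) := hf.comp_affineMap L
  have hderiv : HasDerivAt (f ∘ L) (f' (y - x)) 0 := by
    have hf'0 : HasFDerivAt f f' (L 0) := by simpa [L] using hf'
    exact hf'0.comp_hasDerivAt 0 hasDerivAt_lineMap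
  have hslope := hline.slope_le_of_hasDerivAt (by simpa [L] using hx) (by simpa [L] using hy)
    one_pos hderiv
  simp only [slope_def_field, Function.comp_apply, L, lineMap_apply_zero, lineMap_apply_one,
    sub_zero, div_one] at hslope
  linarith

theorem ConcaveOn.le_add_inner_of_hasGradientAt {E : Type*} [NormedAddCommGroup E]
    [InnerProductSpace ℝ E] [CompleteSpace E] {s : Set E} {f : E → ℝ} {g x y : E}
    (hf : ConcaveOn ℝ s f) (hx : x ∈ s) (hy : y ∈ s) (hg : HasGradientAt f g x) :
    f y ≤ f x + inner ℝ g (y - x) := by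
  simpa using hf.le_add_of_hasFDerivAt hx hy hg.hasFDerivAt

theorem EuclideanSpace.inner_smul_single_sub_smul_single {ι : Type*} [Fintype ι]
    [DecidableEq ι] (v : EuclideanSpace ℝ ι) (i j : ι) (a b : ℝ) :
    inner ℝ v (a • EuclideanSpace.single i (1 : ℝ) - b • EuclideanSpace.single j 1) =
      a * v i - b * v j := by
  simp [inner_sub_right, real_inner_smul_right, EuclideanSpace.inner_single_right]

theorem forward_exchange_rate_bound_general {n : ℕ}
    (φ : EuclideanSpace ℝ (Fin n) → ℝ)
    (g : EuclideanSpace ℝ (Fin n) → EuclideanSpace ℝ (Fin n))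
    (hconc : ConcaveOn ℝ {x : EuclideanSpace ℝ (Fin n) | ∀ i, 0 ≤ x i} φ)
    (hgrad : ∀ x, (∀ i, 0 ≤ x i) → HasGradientAt φ (g x) x)
    (γ : ℝ)
    (i j : Fin n)
    (R : EuclideanSpace ℝ (Fin n)) (hR : ∀ k, 0 ≤ R k)
    (hgpos : ∀ k, 0 < g R k)
    (Dom : Set ℝ)
    (F : ℝ → ℝ)
    (hF : ∀ δ ∈ Dom, 0 ≤ F δ ∧
      (∀ k, 0 ≤ (R + (γ * δ) • EuclideanSpace.single i (1 : ℝ)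
        - F δ • EuclideanSpace.single j (1 : ℝ)) k) ∧
      φ (R + (γ * δ) • EuclideanSpace.single i (1 : ℝ)
        - F δ • EuclideanSpace.single j (1 : ℝ)) = φ R) :
    ∀ δ ∈ Dom, F δ ≤ (γ * g R i / g R j) * δ := by
  intro δ hδ
  obtain ⟨-, hy, hφy⟩ := hF δ hδ
  have htangent := hconc.le_add_inner_of_hasGradientAt hR hy (hgrad R hR)
  rw [hφy, add_sub_assoc, add_sub_cancel_left, EuclideanSpace.inner_smul_single_sub_smul_single] at htangent
  rw [div_mul_eq_mul_div, le_div_iff₀ (hgpos j)]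
  linarith

/-- The forward exchange function is bounded above by the exchange-rate line:
`F(δ) ≤ E·δ` with `E = γ∇φ(R)ᵢ/∇φ(R)ⱼ`. -/
theorem forward_exchange_rate_bound {n : ℕ}
    (φ : EuclideanSpace ℝ (Fin n) → ℝ)
    (g : EuclideanSpace ℝ (Fin n) → EuclideanSpace ℝ (Fin n))
    (hconc : ConcaveOn ℝ {x : EuclideanSpace ℝ (Fin n) | ∀ i, 0 ≤ x i} φ)
    (hgrad : ∀ x, (∀ i, 0 ≤ x i) → HasGradientAt φ (g x) x)
    (hmono : ∀ x y : EuclideanSpace ℝ (Fin n), (∀ i, x i ≤ y i) → x ≠ y → φ x < φ y)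
    (γ : ℝ) (hγ : γ ∈ Set.Ioc (0 : ℝ) 1)
    (i j : Fin n) (hij : i ≠ j)
    (R : EuclideanSpace ℝ (Fin n)) (hR : ∀ k, 0 ≤ R k)
    (hgpos : ∀ k, 0 < g R k)
    (Dom : Set ℝ) (hDom : Dom ⊆ Set.Ici 0)
    (F : ℝ → ℝ) (hF0 : F 0 = 0)
    (hF : ∀ δ ∈ Dom, 0 ≤ F δ ∧
      (∀ k, 0 ≤ (R + (γ * δ) • EuclideanSpace.single i (1 : ℝ)
        - F δ • EuclideanSpace.single j (1 : ℝ)) k) ∧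
      φ (R + (γ * δ) • EuclideanSpace.single i (1 : ℝ)
        - F δ • EuclideanSpace.single j (1 : ℝ)) = φ R) :
    ∀ δ ∈ Dom, F δ ≤ (γ * g R i / g R j) * δ :=
  forward_exchange_rate_bound_general φ g hconc hgrad γ i j R hR hgpos Dom F hF
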